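/- arXiv:2302.11614 — 4 statements merged into one kernel-verified Lean document; each statement's English description precedes it below -/
import Mathlib

section
/- Let p ≥ d ≥ 1 and n, m ≥ 0. Consider the constraint map Φ from the product space (ℝ^{p×d})^n × (ℝ^p)^m to (Sym_d(ℝ))^n × ℝ^m defined by Φ(R_1,…,R_n, r_1,…,r_m) = ((R_1ᵀR_1,…,R_nᵀR_n), (‖r_1‖²,…,‖r_m‖²)), where Sym_d(ℝ) denotes the real vector space of symmetric d×d matrices. Then at every feasible point — i.e., every point satisfying R_iᵀR_i = I_d for all i and ‖r_j‖² = 1 for all j — the (Fréchet) derivative of Φ is surjective. (Equivalently, the gradients of all scalar constraints defining the feasible set of the rank-restricted SDP are linearly independent, so the linear independence constraint qualification holds at every feasible point.) -/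
/-!
The derivative of `R ↦ RᵀR` at `R` is `H ↦ RᵀH + HᵀR`; when `RᵀR = I` it sends
`H = R (T / 2)` to `T / 2 + (T / 2)ᵀ = T` for every symmetric `T`. Likewise the derivative
`h ↦ 2⟪r, h⟫` of `r ↦ ‖r‖²` sends `(s / 2) r` to `s` when `‖r‖ = 1`. The constraint map acts
block by block, so these blockwise preimages assemble into a preimage of any target.
-/

open Matrix

attribute [local instance] Matrix.normedAddCommGroup Matrix.normedSpace

theorem Matrix.transpose_mul_mul_add_transpose_mul_eq {R : Type*} [CommSemiring R]
    {m n : Type*} [Fintype m] [Fintype n] [DecidableEq n] {A : Matrix m n R} (hA : Aᵀ * A = 1)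
    (X : Matrix n n R) : Aᵀ * (A * X) + (A * X)ᵀ * A = X + Xᵀ := by
  rw [← Matrix.mul_assoc, hA, Matrix.one_mul, transpose_mul, Matrix.mul_assoc, hA, Matrix.mul_one]

section Gram

variable {𝕜 : Type*} [NontriviallyNormedField 𝕜] [CompleteSpace 𝕜] {m n : Type*}
  [Fintype m] [Fintype n]

def Matrix.transposeMulCLM : Matrix m n 𝕜 →L[𝕜] Matrix m n 𝕜 →L[𝕜] Matrix n n 𝕜 :=
  ((mulLinearMap 𝕜).comp (transposeLinearEquiv m n 𝕜 𝕜).toLinearMap).toContinuousBilinearMap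

def Matrix.gramDerivCLM (A : Matrix m n 𝕜) : Matrix m n 𝕜 →L[𝕜] Matrix n n 𝕜 :=
  LinearMap.toContinuousLinearMap <| mulLeftLinearMap n 𝕜 Aᵀ +
    (mulRightLinearMap n 𝕜 A).comp (transposeLinearEquiv m n 𝕜 𝕜).toLinearMap

@[simp]
theorem Matrix.gramDerivCLM_apply (A H : Matrix m n 𝕜) :
    gramDerivCLM A H = Aᵀ * H + Hᵀ * A :=
  rfl

theorem hasFDerivAt_transpose_mul_self (A : Matrix m n 𝕜) :
    HasFDerivAt (fun B : Matrix m n 𝕜 => Bᵀ * B) (gramDerivCLM A) A :=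
  (transposeMulCLM.hasFDerivAt_of_bilinear (hasFDerivAt_id A) (hasFDerivAt_id A)).congr_fderiv
    (ContinuousLinearMap.ext fun _ => rfl)

theorem Matrix.gramDerivCLM_mul_half_smul [NeZero (2 : 𝕜)] [DecidableEq n] {A : Matrix m n 𝕜}
    (hA : Aᵀ * A = 1) {T : Matrix n n 𝕜} (hT : T.IsSymm) :
    gramDerivCLM A (A * ((2 : 𝕜)⁻¹ • T)) = T := by
  rw [gramDerivCLM_apply, transpose_mul_mul_add_transpose_mul_eq hA, transpose_smul, hT.eq,
    ← add_smul, ← two_mul, mul_inv_cancel₀ two_ne_zero, one_smul]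

end Gram

theorem two_smul_innerSL_apply_smul_self {F : Type*} [NormedAddCommGroup F]
    [InnerProductSpace ℝ F] {v : F} (hv : ‖v‖ ^ 2 = 1) (s : ℝ) :
    (2 • innerSL ℝ v) ((s / 2) • v) = s := by
  simp [hv]

theorem licq_holds_at_feasible_points_general {p d n m : ℕ}
    (Φ : ((Fin n → Matrix (Fin p) (Fin d) ℝ) × (Fin m → EuclideanSpace ℝ (Fin p))) →
         ((Fin n → Matrix (Fin d) (Fin d) ℝ) × (Fin m → ℝ)))
    (hΦ : ∀ x, Φ x = (fun i => (x.1 i)ᵀ * x.1 i, fun j => ‖x.2 j‖ ^ 2))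
    (x : (Fin n → Matrix (Fin p) (Fin d) ℝ) × (Fin m → EuclideanSpace ℝ (Fin p)))
    (hfeas₁ : ∀ i, (x.1 i)ᵀ * x.1 i = 1)
    (hfeas₂ : ∀ j, ‖x.2 j‖ ^ 2 = 1) :
    ∃ f : ((Fin n → Matrix (Fin p) (Fin d) ℝ) × (Fin m → EuclideanSpace ℝ (Fin p))) →L[ℝ]
          ((Fin n → Matrix (Fin d) (Fin d) ℝ) × (Fin m → ℝ)),
      HasFDerivAt Φ f x ∧
      ∀ (T : Fin n → Matrix (Fin d) (Fin d) ℝ) (s : Fin m → ℝ),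
        (∀ i, (T i).IsSymm) → ∃ u, f u = (T, s) := by
  obtain rfl : Φ = _ := funext hΦ
  let projMat (i : Fin n) : _ →L[ℝ] Matrix (Fin p) (Fin d) ℝ :=
    (ContinuousLinearMap.proj i).comp
      (.fst ℝ (Fin n → Matrix (Fin p) (Fin d) ℝ) (Fin m → EuclideanSpace ℝ (Fin p)))
  let projVec (j : Fin m) : _ →L[ℝ] EuclideanSpace ℝ (Fin p) :=
    (ContinuousLinearMap.proj j).comp
      (.snd ℝ (Fin n → Matrix (Fin p) (Fin d) ℝ) (Fin m → EuclideanSpace ℝ (Fin p)))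
  refine ⟨(ContinuousLinearMap.pi fun i => gramDerivCLM (x.1 i) ∘L projMat i).prod
    (ContinuousLinearMap.pi fun j => 2 • innerSL ℝ (x.2 j) ∘L projVec j), ?_, ?_⟩
  · exact (hasFDerivAt_pi.2 fun i =>
        (hasFDerivAt_transpose_mul_self _).comp x (projMat i).hasFDerivAt).prodMk
      (hasFDerivAt_pi.2 fun j => (projVec j).hasFDerivAt.norm_sq)
  · intro T s hT
    refine ⟨(fun i => x.1 i * ((2 : ℝ)⁻¹ • T i), fun j => (s j / 2) • x.2 j),
      Prod.ext (funext fun i => ?_) (funext fun j => ?_)⟩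
    · exact gramDerivCLM_mul_half_smul (hfeas₁ i) (hT i)
    · exact two_smul_innerSL_apply_smul_self (hfeas₂ j) (s j)

/-- **LICQ for the rank-restricted SDP.** Let `p ≥ d ≥ 1`. The constraint map
`Φ(R₁,…,Rₙ, r₁,…,r_m) = ((RᵢᵀRᵢ)ᵢ, (‖rⱼ‖²)ⱼ)` is Fréchet differentiable at every feasible
point (where `RᵢᵀRᵢ = I` and `‖rⱼ‖² = 1`), and its derivative there is surjective onto
`(Sym_d(ℝ))ⁿ × ℝᵐ` (targets whose matrix components are symmetric). -/
theorem licq_holds_at_feasible_points {p d n m : ℕ} (hd : 1 ≤ d) (hpd : d ≤ p)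
    (Φ : ((Fin n → Matrix (Fin p) (Fin d) ℝ) × (Fin m → EuclideanSpace ℝ (Fin p))) →
         ((Fin n → Matrix (Fin d) (Fin d) ℝ) × (Fin m → ℝ)))
    (hΦ : ∀ x, Φ x = (fun i => (x.1 i)ᵀ * x.1 i, fun j => ‖x.2 j‖ ^ 2))
    (x : (Fin n → Matrix (Fin p) (Fin d) ℝ) × (Fin m → EuclideanSpace ℝ (Fin p)))
    (hfeas₁ : ∀ i, (x.1 i)ᵀ * x.1 i = 1)
    (hfeas₂ : ∀ j, ‖x.2 j‖ ^ 2 = 1) :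
    ∃ f : ((Fin n → Matrix (Fin p) (Fin d) ℝ) × (Fin m → EuclideanSpace ℝ (Fin p))) →L[ℝ]
          ((Fin n → Matrix (Fin d) (Fin d) ℝ) × (Fin m → ℝ)),
      HasFDerivAt Φ f x ∧
      ∀ (T : Fin n → Matrix (Fin d) (Fin d) ℝ) (s : Fin m → ℝ),
        (∀ i, (T i).IsSymm) → ∃ u, f u = (T, s) :=
  licq_holds_at_feasible_points_general Φ hΦ x hfeas₁ hfeas₂
end

section
/- Let Q, A_1, …, A_m be real symmetric k×k matrices, b ∈ ℝ^m, λ ∈ ℝ^m, β ≥ 0, and let X̂ ∈ ℝ^{k×p} satisfy tr(A_i X̂ X̂ᵀ) = b_i for all i and S X̂ = 0, where S = Q + Σ_{i=1}^m λ_i A_i. If S + βI is positive semidefinite (as certified, e.g., by existence of a Cholesky factorization S + βI = LLᵀ), then for every positive semidefinite Z ∈ ℝ^{k×k} with tr(A_i Z) = b_i for all i, one has tr(Q Z) ≥ tr(Q X̂ X̂ᵀ) − β · tr(Z). In particular β acts as a numerical tolerance in the optimality certificate. -/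
/-!
Weak duality with a slack of `β`. Put `S = Q + ∑ᵢ λᵢ Aᵢ`. For every `W` satisfying the
constraints, `tr(S W) = tr(Q W) + ∑ᵢ λᵢ bᵢ`. At `W = X̂ X̂ᵀ` the left side vanishes because
`S X̂ = 0`, and at a feasible `Z ⪰ 0` it is at least `-β tr Z`, since the trace of a product of
two positive semidefinite matrices is nonnegative and `S + βI ⪰ 0`.
-/

open Matrix
open scoped ComplexOrder

namespace Matrix

theorem PosSemidef.trace_mul_nonneg {n 𝕜 : Type*} [Fintype n] [RCLike 𝕜]
    {P Z : Matrix n n 𝕜} (hP : P.PosSemidef) (hZ : Z.PosSemidef) : 0 ≤ (P * Z).trace := by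
  classical
  obtain ⟨B, rfl⟩ : ∃ B : Matrix n n 𝕜, Z = Bᴴ * B := by
    open scoped MatrixOrder in exact CStarAlgebra.nonneg_iff_eq_star_mul_self.mp hZ.nonneg
  rw [← Matrix.mul_assoc, trace_mul_comm, ← Matrix.mul_assoc]
  exact (hP.mul_mul_conjTranspose_same B).trace_nonneg

theorem trace_add_sum_smul_mul {n ι R : Type*} [Fintype n] [Fintype ι] [CommSemiring R]
    (Q W : Matrix n n R) (A : ι → Matrix n n R) (c : ι → R) :
    ((Q + ∑ i, c i • A i) * W).trace = (Q * W).trace + ∑ i, c i * (A i * W).trace := by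
  simp only [Matrix.add_mul, Finset.sum_mul, trace_add, trace_sum, Matrix.smul_mul, trace_smul,
    smul_eq_mul]

theorem trace_add_smul_one_mul {n R : Type*} [Fintype n] [DecidableEq n] [CommSemiring R]
    (S Z : Matrix n n R) (β : R) : ((S + β • 1) * Z).trace = (S * Z).trace + β * Z.trace := by
  rw [Matrix.add_mul, trace_add, Matrix.smul_mul, Matrix.one_mul, trace_smul, smul_eq_mul]

end Matrix

theorem sdp_certificate_tolerance_bound_general {k p m : ℕ}
    (Q : Matrix (Fin k) (Fin k) ℝ) (A : Fin m → Matrix (Fin k) (Fin k) ℝ)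
    (b lam : Fin m → ℝ) (β : ℝ) (Xh : Matrix (Fin k) (Fin p) ℝ)
    (hfeas : ∀ i, (A i * (Xh * Xhᵀ)).trace = b i)
    (hstat : (Q + ∑ i, lam i • A i) * Xh = 0)
    (hPSD : ((Q + ∑ i, lam i • A i) + β • (1 : Matrix (Fin k) (Fin k) ℝ)).PosSemidef) :
    ∀ Z : Matrix (Fin k) (Fin k) ℝ, Z.PosSemidef → (∀ i, (A i * Z).trace = b i) →
      (Q * (Xh * Xhᵀ)).trace - β * Z.trace ≤ (Q * Z).trace := by
  intro Z hZ hZfeas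
  set S := Q + ∑ i, lam i • A i
  have hSXh : (S * (Xh * Xhᵀ)).trace = 0 := by
    rw [← Matrix.mul_assoc, hstat, Matrix.zero_mul, trace_zero]
  have hXh : (S * (Xh * Xhᵀ)).trace = (Q * (Xh * Xhᵀ)).trace + ∑ i, lam i * b i := by
    simp only [S, trace_add_sum_smul_mul, hfeas]
  have hSZ : (S * Z).trace = (Q * Z).trace + ∑ i, lam i * b i := by
    simp only [S, trace_add_sum_smul_mul, hZfeas]
  have hslack : 0 ≤ (S * Z).trace + β * Z.trace :=
    trace_add_smul_one_mul S Z β ▸ hPSD.trace_mul_nonneg hZ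
  linarith

/-- If `S + βI` is positive semidefinite, where `S = Q + ∑ᵢ λᵢ Aᵢ` is the
certificate matrix, `β ≥ 0`, and `S X̂ = 0` at a feasible `X̂`, then every feasible `Z` of
the SDP satisfies `tr(Q Z) ≥ tr(Q X̂ X̂ᵀ) − β · tr(Z)`. -/
theorem sdp_certificate_tolerance_bound {k p m : ℕ}
    (Q : Matrix (Fin k) (Fin k) ℝ) (A : Fin m → Matrix (Fin k) (Fin k) ℝ)
    (b lam : Fin m → ℝ) (β : ℝ) (hβ : 0 ≤ β) (Xh : Matrix (Fin k) (Fin p) ℝ)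
    (hQ : Q.IsSymm) (hA : ∀ i, (A i).IsSymm)
    (hfeas : ∀ i, (A i * (Xh * Xhᵀ)).trace = b i)
    (hstat : (Q + ∑ i, lam i • A i) * Xh = 0)
    (hPSD : ((Q + ∑ i, lam i • A i) + β • (1 : Matrix (Fin k) (Fin k) ℝ)).PosSemidef) :
    ∀ Z : Matrix (Fin k) (Fin k) ℝ, Z.PosSemidef → (∀ i, (A i * Z).trace = b i) →
      (Q * (Xh * Xhᵀ)).trace - β * Z.trace ≤ (Q * Z).trace :=
  sdp_certificate_tolerance_bound_general Q A b lam β Xh hfeas hstat hPSD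
end

section
/- Fix translations t_1, …, t_N ∈ ℝ^n (n ≥ 1), a finite set E of index pairs, nonnegative measured ranges d̃_{ij} ≥ 0 and positive weights w_{ij} > 0 for (i,j) ∈ E. Then the minimum over families of unit vectors (r_{ij})_{(i,j)∈E} ⊂ ℝ^n of Σ_{(i,j)∈E} w_{ij} ‖d̃_{ij}·r_{ij} − (t_i − t_j)‖² equals Σ_{(i,j)∈E} w_{ij} (d̃_{ij} − ‖t_i − t_j‖)², and the minimum is attained. In particular, the reformulated range cost with auxiliary unit-norm variables has the same optimal value (and the same optimal translations) as the original range cost. -/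
/-!
The problem decouples over the edges. For a unit vector `r` and `d ≥ 0` the reverse triangle
inequality gives `‖d • r - v‖ ≥ |‖d • r‖ - ‖v‖| = |d - ‖v‖|`, with equality when `r` points along
`v` (any unit vector if `v = 0`).
-/

open BigOperators

section UnitVector

variable {E : Type*}

theorem sq_sub_norm_le_norm_smul_sub_sq [SeminormedAddCommGroup E] [NormedSpace ℝ E]
    {d : ℝ} (hd : 0 ≤ d) {r : E} (hr : ‖r‖ = 1) (v : E) :
    (d - ‖v‖) ^ 2 ≤ ‖d • r - v‖ ^ 2 := by
  have hdr : ‖d • r‖ = d := by rw [norm_smul, hr, mul_one, Real.norm_of_nonneg hd]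
  calc (d - ‖v‖) ^ 2 = |‖d • r‖ - ‖v‖| ^ 2 := by rw [sq_abs, hdr]
    _ ≤ ‖d • r - v‖ ^ 2 := pow_le_pow_left₀ (abs_nonneg _) (abs_norm_sub_norm_le _ _) 2

theorem exists_norm_eq_one_norm_smul_eq [NormedAddCommGroup E] [NormedSpace ℝ E] [Nontrivial E]
    (v : E) : ∃ u : E, ‖u‖ = 1 ∧ ‖v‖ • u = v := by
  rcases eq_or_ne v 0 with rfl | hv
  · obtain ⟨u, hu⟩ := exists_norm_eq E zero_le_one
    exact ⟨u, hu, by simp⟩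
  · exact ⟨‖v‖⁻¹ • v, norm_smul_inv_norm hv, by simp [smul_smul, norm_ne_zero_iff.mpr hv]⟩

theorem exists_norm_eq_one_norm_smul_sub_eq [NormedAddCommGroup E] [NormedSpace ℝ E]
    [Nontrivial E] (d : ℝ) (v : E) : ∃ u : E, ‖u‖ = 1 ∧ ‖d • u - v‖ = |d - ‖v‖| := by
  obtain ⟨u, hu, hvu⟩ := exists_norm_eq_one_norm_smul_eq v
  refine ⟨u, hu, ?_⟩
  rw [← hvu, ← sub_smul, norm_smul, hu, mul_one, Real.norm_eq_abs, hvu]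

end UnitVector

/-- With fixed translations `t₁, …, t_N ∈ ℝⁿ`, nonnegative measured ranges
`d̃ᵢⱼ` and positive weights `wᵢⱼ` over a finite set `E` of index pairs, the minimum over
families of unit vectors `(rᵢⱼ)` of `∑ wᵢⱼ ‖d̃ᵢⱼ·rᵢⱼ − (tᵢ − tⱼ)‖²` equals
`∑ wᵢⱼ (d̃ᵢⱼ − ‖tᵢ − tⱼ‖)²`, and the minimum is attained. -/
theorem reformulated_range_cost_min {N n : ℕ} (hn : 1 ≤ n)
    (t : Fin N → EuclideanSpace ℝ (Fin n)) (E : Finset (Fin N × Fin N))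
    (dt w : Fin N × Fin N → ℝ)
    (hdt : ∀ e ∈ E, 0 ≤ dt e) (hw : ∀ e ∈ E, 0 < w e) :
    IsLeast
      {c : ℝ | ∃ r : Fin N × Fin N → EuclideanSpace ℝ (Fin n),
        (∀ e ∈ E, ‖r e‖ = 1) ∧
        c = ∑ e ∈ E, w e * ‖dt e • r e - (t e.1 - t e.2)‖ ^ 2}
      (∑ e ∈ E, w e * (dt e - ‖t e.1 - t e.2‖) ^ 2) := by
  have : Nonempty (Fin n) := ⟨⟨0, hn⟩⟩
  constructor
  · choose r hr_norm hr_eq using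
      fun e : Fin N × Fin N => exists_norm_eq_one_norm_smul_sub_eq (dt e) (t e.1 - t e.2)
    refine ⟨r, fun e _ => hr_norm e, Finset.sum_congr rfl fun e _ => ?_⟩
    rw [hr_eq, sq_abs]
  · rintro c ⟨r, hr, rfl⟩
    exact Finset.sum_le_sum fun e he => mul_le_mul_of_nonneg_left
      (sq_sub_norm_le_norm_smul_sub_sq (hdt e he) (hr e he) _) (hw e he).le
end

section
/- Let Q, A_1, …, A_m be real symmetric k×k matrices, b ∈ ℝ^m, λ ∈ ℝ^m, and define the Lagrangian L(X, λ) = tr(Q X Xᵀ) + Σ_{i=1}^m λ_i (tr(A_i X Xᵀ) − b_i) = tr(S X Xᵀ) − Σ_i λ_i b_i with S = Q + Σ_i λ_i A_i. Let X⁺ ∈ ℝ^{k×(p+1)} have last column equal to zero, let v ∈ ℝ^k, and let D ∈ ℝ^{k×(p+1)} be the matrix whose last column is v and whose other columns are zero. Then for every t ∈ ℝ, L(X⁺ + tD, λ) = L(X⁺, λ) + t² · vᵀ S v. In particular, if v lies in the negative eigenspace of S (i.e., vᵀ S v < 0), then D is a descent direction: L(X⁺ + tD, λ) < L(X⁺,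 λ) for every t ≠ 0. -/
open Matrix BigOperators

/-! Since the last column of `X⁺` vanishes and `D` lives only in that column, `X⁺ Dᵀ = 0`, so the
Gram matrix of `X⁺ + tD` is `X⁺X⁺ᵀ + t² v vᵀ`. The Lagrangian is affine in the Gram matrix with
linear part `Y ↦ tr(S Y)`, and `tr(S v vᵀ) = vᵀ S v`. -/

section ColumnSupport

variable {R m n : Type*} [CommRing R] [Fintype n]

theorem mul_transpose_add_smul_of_mul_transpose_eq_zero {X D : Matrix m n R}
    (h : X * Dᵀ = 0) (t : R) :
    (X + t • D) * (X + t • D)ᵀ = X * Xᵀ + t ^ 2 • (D * Dᵀ) := by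
  have h' : D * Xᵀ = 0 := by simpa [transpose_mul] using congrArg transpose h
  simp only [transpose_add, transpose_smul, Matrix.add_mul, Matrix.mul_add, Matrix.smul_mul,
    Matrix.mul_smul, h, h', smul_zero, add_zero, zero_add, smul_smul, sq]

theorem mul_transpose_eq_zero_of_col_eq_zero {X D : Matrix m n R} {c : n}
    (hX : ∀ i, X i c = 0) (hD : ∀ i j, j ≠ c → D i j = 0) : X * Dᵀ = 0 := by
  ext i i'
  refine Finset.sum_eq_zero fun j _ => ?_
  by_cases hj : j = c
  · simp [hj, hX]
  · simp [hD i' j hj]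

theorem mul_transpose_eq_vecMulVec_of_eq_ite [DecidableEq n] {D : Matrix m n R} {c : n}
    {v : m → R} (hD : ∀ i j, D i j = if j = c then v i else 0) : D * Dᵀ = vecMulVec v v := by
  ext i i'
  simp [mul_apply, hD, vecMulVec_apply]

end ColumnSupport

section Lagrangian

variable {R k ι : Type*} [CommRing R] [Fintype k] [Fintype ι]

/-- The Lagrangian `L(X, λ)` of the rank-restricted SDP, as a function of the Gram matrix
`Y = X Xᵀ`. -/
def gramLagrangian (Q : Matrix k k R) (A : ι → Matrix k k R) (b lam : ι → R)
    (Y : Matrix k k R) : R :=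
  (Q * Y).trace + ∑ i, lam i * ((A i * Y).trace - b i)

theorem gramLagrangian_add (Q : Matrix k k R) (A : ι → Matrix k k R) (b lam : ι → R)
    (Y Z : Matrix k k R) :
    gramLagrangian Q A b lam (Y + Z) =
      gramLagrangian Q A b lam Y + ((Q + ∑ i, lam i • A i) * Z).trace := by
  simp only [gramLagrangian, Matrix.add_mul, trace_add, Matrix.sum_mul,
    trace_sum, Matrix.smul_mul, trace_smul, smul_eq_mul, add_sub_right_comm _ (A _ * Z).trace,
    mul_add, Finset.sum_add_distrib]
  ring

theorem trace_mul_vecMulVec_self (M : Matrix k k R) (v : k → R) :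
    (M * vecMulVec v v).trace = v ⬝ᵥ M *ᵥ v := by
  rw [mul_vecMulVec, trace_vecMulVec, dotProduct_comm]

end Lagrangian

theorem saddle_escape_direction_general {k p m : ℕ}
    (Q : Matrix (Fin k) (Fin k) ℝ) (A : Fin m → Matrix (Fin k) (Fin k) ℝ)
    (b lam : Fin m → ℝ)
    (Xp : Matrix (Fin k) (Fin (p + 1)) ℝ) (hzero : ∀ i : Fin k, Xp i (Fin.last p) = 0)
    (v : Fin k → ℝ) (D : Matrix (Fin k) (Fin (p + 1)) ℝ)
    (hD : ∀ i j, D i j = if j = Fin.last p then v i else 0) :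
    (∀ t : ℝ,
      ((Q * ((Xp + t • D) * (Xp + t • D)ᵀ)).trace +
          ∑ i, lam i * ((A i * ((Xp + t • D) * (Xp + t • D)ᵀ)).trace - b i)) =
        ((Q * (Xp * Xpᵀ)).trace + ∑ i, lam i * ((A i * (Xp * Xpᵀ)).trace - b i)) +
          t ^ 2 * (v ⬝ᵥ (Q + ∑ i, lam i • A i).mulVec v)) ∧
    (v ⬝ᵥ (Q + ∑ i, lam i • A i).mulVec v < 0 → ∀ t : ℝ, t ≠ 0 →
      ((Q * ((Xp + t • D) * (Xp + t • D)ᵀ)).trace +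
          ∑ i, lam i * ((A i * ((Xp + t • D) * (Xp + t • D)ᵀ)).trace - b i)) <
        ((Q * (Xp * Xpᵀ)).trace + ∑ i, lam i * ((A i * (Xp * Xpᵀ)).trace - b i))) := by
  have hXD : Xp * Dᵀ = 0 :=
    mul_transpose_eq_zero_of_col_eq_zero hzero fun i j hj => by simp [hD, hj]
  have hL : ∀ t : ℝ, gramLagrangian Q A b lam ((Xp + t • D) * (Xp + t • D)ᵀ) =
      gramLagrangian Q A b lam (Xp * Xpᵀ) + t ^ 2 * (v ⬝ᵥ (Q + ∑ i, lam i • A i) *ᵥ v) := by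
    intro t
    rw [mul_transpose_add_smul_of_mul_transpose_eq_zero hXD,
      mul_transpose_eq_vecMulVec_of_eq_ite hD, gramLagrangian_add, Matrix.mul_smul, trace_smul,
      trace_mul_vecMulVec_self, smul_eq_mul]
  refine ⟨hL, fun hneg t ht => ?_⟩
  change gramLagrangian Q A b lam _ < gramLagrangian Q A b lam _
  rw [hL t]
  have ht2 : 0 < t ^ 2 := by positivity
  linarith [mul_neg_of_pos_of_neg ht2 hneg]

/-- Let `L(X, λ) = tr(Q X Xᵀ) + ∑ᵢ λᵢ (tr(Aᵢ X Xᵀ) − bᵢ)` be the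
Lagrangian of the rank-restricted SDP and `S = Q + ∑ᵢ λᵢ Aᵢ`. If `X⁺` has last column zero
and `D` has last column `v` and all other columns zero, then
`L(X⁺ + tD, λ) = L(X⁺, λ) + t² vᵀSv`; in particular if `vᵀSv < 0` then `D` is a descent
direction. -/
theorem saddle_escape_direction {k p m : ℕ}
    (Q : Matrix (Fin k) (Fin k) ℝ) (A : Fin m → Matrix (Fin k) (Fin k) ℝ)
    (b lam : Fin m → ℝ) (hQ : Q.IsSymm) (hA : ∀ i, (A i).IsSymm)
    (Xp : Matrix (Fin k) (Fin (p + 1)) ℝ) (hzero : ∀ i : Fin k, Xp i (Fin.last p) = 0)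
    (v : Fin k → ℝ) (D : Matrix (Fin k) (Fin (p + 1)) ℝ)
    (hD : ∀ i j, D i j = if j = Fin.last p then v i else 0) :
    (∀ t : ℝ,
      ((Q * ((Xp + t • D) * (Xp + t • D)ᵀ)).trace +
          ∑ i, lam i * ((A i * ((Xp + t • D) * (Xp + t • D)ᵀ)).trace - b i)) =
        ((Q * (Xp * Xpᵀ)).trace + ∑ i, lam i * ((A i * (Xp * Xpᵀ)).trace - b i)) +
          t ^ 2 * (v ⬝ᵥ (Q + ∑ i, lam i • A i).mulVec v)) ∧
    (v ⬝ᵥ (Q + ∑ i, lam i • A i).mulVec v < 0 → ∀ t : ℝ, t ≠ 0 →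
      ((Q * ((Xp + t • D) * (Xp + t • D)ᵀ)).trace +
          ∑ i, lam i * ((A i * ((Xp + t • D) * (Xp + t • D)ᵀ)).trace - b i)) <
        ((Q * (Xp * Xpᵀ)).trace + ∑ i, lam i * ((A i * (Xp * Xpᵀ)).trace - b i))) :=
  saddle_escape_direction_general Q A b lam Xp hzero v D hD
end
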